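/- Let Γ ≤ S₁₁ be generated by (1 2), (3 4), (5 6), (8 9), (10 11). The unique maximal Γ-orbit of T₇ equals the set of all scales of the form {0, a₁, a₂, a₃, 7, a₄, a₅} where a₁ ∈ {1,2}, a₂ ∈ {3,4}, a₃ ∈ {5,6}, a₄ ∈ {8,9}, a₅ ∈ {10,11}; this set has exactly 32 elements. -/

import Mathlib

/-- The subgroup Γ of S₁₁ (permutations of ℤ₁₂ fixing 0) generated by
(1 2), (3 4), (5 6), (8 9), (10 11). -/
def Gamma : Subgroup (Equiv.Perm (ZMod 12)) :=
  Subgroup.closure {Equiv.swap 1 2, Equiv.swap 3 4, Equiv.swap 5 6,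
    Equiv.swap 8 9, Equiv.swap 10 11}

/-- The Γ-orbit of a scale s, where permutations act elementwise. -/
def gammaOrbit (s : Finset (ZMod 12)) : Set (Finset (ZMod 12)) :=
  {t | ∃ σ ∈ Gamma, t = s.image ⇑σ}

/-- The 32 scales {0, a₁, a₂, a₃, 7, a₄, a₅} with a₁ ∈ {1,2}, a₂ ∈ {3,4}, a₃ ∈ {5,6},
a₄ ∈ {8,9}, a₅ ∈ {10,11} (the 32 thāts). -/
def thats : Set (Finset (ZMod 12)) :=
  {u | ∃ a₁ a₂ a₃ a₄ a₅ : ZMod 12,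
    (a₁ = 1 ∨ a₁ = 2) ∧ (a₂ = 3 ∨ a₂ = 4) ∧ (a₃ = 5 ∨ a₃ = 6) ∧
    (a₄ = 8 ∨ a₄ = 9) ∧ (a₅ = 10 ∨ a₅ = 11) ∧
    u = ({0, a₁, a₂, a₃, 7, a₄, a₅} : Finset (ZMod 12))}

/-!
Γ is generated by five commuting transpositions, so `|Γ| ≤ 2⁵ = 32` and every Γ-orbit has at
most 32 elements. The orbit of `{0, 1, 3, 5, 7, 8, 10}` contains all 32 thāts, so a maximal orbit
has `32 ≥ |Γ|` elements and all its members have trivial stabiliser. A scale fixed by no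
generator `(a b)` contains exactly one of `a`, `b`; together with `0` and `7` this already gives
seven notes, so a 7-note scale with trivial stabiliser is a thāt. Hence a maximal orbit lies inside
the set of thāts, and equals it by counting.
-/

open Equiv MulAction Subgroup Pointwise

theorem Subgroup.card_closure_range_le_prod_orderOf {G ι : Type*} [Group G] [Finite G]
    [Fintype ι] (g : ι → G) (hcomm : Pairwise fun i j => Commute (g i) (g j)) :
    Nat.card (closure (Set.range g)) ≤ ∏ i, orderOf (g i) := by
  have hcomm' : Pairwise fun i j =>
      ∀ x y : G, x ∈ zpowers (g i) → y ∈ zpowers (g j) → Commute x y := by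
    rintro i j hij - - ⟨m, rfl⟩ ⟨n, rfl⟩
    exact (hcomm hij).zpow_zpow m n
  have hrange : closure (Set.range g) = (noncommPiCoprod hcomm').range := by
    rw [noncommPiCoprod_range, ← Set.iUnion_singleton_eq_range, closure_iUnion]
    simp only [zpowers_eq_closure]
  calc Nat.card (closure (Set.range g))
      = Nat.card (noncommPiCoprod hcomm').range := by rw [hrange]
    _ ≤ Nat.card (∀ i, zpowers (g i)) :=
      Nat.card_le_card_of_surjective _ (noncommPiCoprod hcomm').rangeRestrict_surjective
    _ = ∏ i, orderOf (g i) := by simp only [Nat.card_pi, Nat.card_zpowers]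

theorem MulAction.stabilizer_eq_bot_of_card_le_ncard_orbit {G X : Type*} [Group G] [Finite G]
    [MulAction G X] {x : X} (h : Nat.card G ≤ (orbit G x).ncard) : stabilizer G x = ⊥ := by
  have hmul := (stabilizer G x).card_mul_index
  rw [index_stabilizer] at hmul
  have hpos : 0 < (orbit G x).ncard := Nat.card_pos.trans_le h
  have hle : Nat.card (stabilizer G x) ≤ 1 :=
    Nat.le_of_mul_le_mul_right (by rw [one_mul, hmul]; exact h) hpos
  exact card_eq_one.mp (le_antisymm hle Nat.card_pos)

theorem Finset.swap_smul_eq_self {α : Type*} [DecidableEq α] {s : Finset α} {a b : α}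
    (h : a ∈ s ↔ b ∈ s) : swap a b • s = s := by
  ext x
  rw [← Finset.inv_smul_mem_iff, swap_inv, Perm.smul_def, swap_apply_def]
  split_ifs <;> simp_all

theorem Subgroup.mem_iff_notMem_of_stabilizer_eq_bot {α : Type*} [DecidableEq α]
    {G : Subgroup (Perm α)} {s : Finset α} (hs : stabilizer G s = ⊥) {a b : α} (hab : a ≠ b)
    (hG : swap a b ∈ G) : a ∈ s ↔ b ∉ s := by
  by_contra h
  have hfix : (⟨swap a b, hG⟩ : G) ∈ stabilizer G s := Finset.swap_smul_eq_self (by tauto)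
  rw [hs, mem_bot] at hfix
  exact hab (swap_eq_one_iff.mp (congrArg Subtype.val hfix))

def gammaGenerators : Fin 5 → Perm (ZMod 12) :=
  ![swap 1 2, swap 3 4, swap 5 6, swap 8 9, swap 10 11]

theorem Gamma_eq_closure_range : Gamma = closure (Set.range gammaGenerators) := by
  unfold Gamma
  congr 1
  ext
  simp only [gammaGenerators, Matrix.range_cons, Matrix.range_empty, Set.union_empty,
    Set.union_singleton, Set.union_insert, Set.mem_insert_iff, Set.mem_singleton_iff]
  tauto

theorem gammaGenerators_mem (i : Fin 5) : gammaGenerators i ∈ Gamma :=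
  Gamma_eq_closure_range ▸ subset_closure (Set.mem_range_self i)

theorem card_Gamma_le : Nat.card Gamma ≤ 32 := by
  have hcomm : Pairwise fun i j => Commute (gammaGenerators i) (gammaGenerators j) := by
    unfold Pairwise Commute SemiconjBy
    decide
  have horder : ∀ a b : ZMod 12, a ≠ b → orderOf (swap a b) = 2 := fun a b hab =>
    Perm.IsSwap.orderOf ⟨a, b, hab, rfl⟩
  rw [Gamma_eq_closure_range]
  refine (card_closure_range_le_prod_orderOf _ hcomm).trans_eq ?_
  simp (disch := decide) [Fin.prod_univ_five, gammaGenerators, horder]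

theorem gammaOrbit_eq_orbit (s : Finset (ZMod 12)) : gammaOrbit s = orbit Gamma s := by
  ext t
  simp [gammaOrbit, mem_orbit_iff, Finset.smul_finset_def, Subgroup.smul_def, eq_comm]

theorem ncard_orbit_le (s : Finset (ZMod 12)) : (orbit Gamma s).ncard ≤ 32 := by
  rw [← index_stabilizer]
  exact (Nat.le_of_dvd Nat.card_pos (index_dvd_card _)).trans card_Gamma_le

theorem mem_thats_of_separated {s : Finset (ZMod 12)} (hs : s.card = 7)
    (h₁ : 1 ∈ s ↔ 2 ∉ s) (h₂ : 3 ∈ s ↔ 4 ∉ s) (h₃ : 5 ∈ s ↔ 6 ∉ s) (h₄ : 8 ∈ s ↔ 9 ∉ s)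
    (h₅ : 10 ∈ s ↔ 11 ∉ s) : s ∈ thats := by
  refine ⟨if 1 ∈ s then 1 else 2, if 3 ∈ s then 3 else 4, if 5 ∈ s then 5 else 6,
    if 8 ∈ s then 8 else 9, if 10 ∈ s then 10 else 11,
    by split_ifs <;> simp, by split_ifs <;> simp, by split_ifs <;> simp,
    by split_ifs <;> simp, by split_ifs <;> simp, Finset.eq_of_subset_of_card_le ?_ ?_⟩
  · intro x hx
    have hx12 : ∀ y : ZMod 12, y = 0 ∨ y = 1 ∨ y = 2 ∨ y = 3 ∨ y = 4 ∨ y = 5 ∨ y = 6 ∨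
        y = 7 ∨ y = 8 ∨ y = 9 ∨ y = 10 ∨ y = 11 := by decide
    rcases hx12 x with rfl | rfl | rfl | rfl | rfl | rfl | rfl | rfl | rfl | rfl | rfl | rfl <;>
      simp_all
  · rw [hs]
    iterate 6 refine (Finset.card_insert_le _ _).trans (Nat.succ_le_succ ?_)
    simp

theorem mem_thats_of_stabilizer_eq_bot {s : Finset (ZMod 12)} (hs : s.card = 7)
    (h : stabilizer Gamma s = ⊥) : s ∈ thats :=
  mem_thats_of_separated hs
    (mem_iff_notMem_of_stabilizer_eq_bot h (by decide) (gammaGenerators_mem 0))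
    (mem_iff_notMem_of_stabilizer_eq_bot h (by decide) (gammaGenerators_mem 1))
    (mem_iff_notMem_of_stabilizer_eq_bot h (by decide) (gammaGenerators_mem 2))
    (mem_iff_notMem_of_stabilizer_eq_bot h (by decide) (gammaGenerators_mem 3))
    (mem_iff_notMem_of_stabilizer_eq_bot h (by decide) (gammaGenerators_mem 4))

theorem thats_eq_image : thats = (fun a : ZMod 12 × ZMod 12 × ZMod 12 × ZMod 12 × ZMod 12 =>
      ({0, a.1, a.2.1, a.2.2.1, 7, a.2.2.2.1, a.2.2.2.2} : Finset (ZMod 12))) ''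
    ↑(({1, 2} ×ˢ {3, 4} ×ˢ {5, 6} ×ˢ {8, 9} ×ˢ {10, 11}) :
      Finset (ZMod 12 × ZMod 12 × ZMod 12 × ZMod 12 × ZMod 12)) := by
  ext u
  simp only [thats, Set.mem_image, Finset.coe_product, Set.mem_prod, Finset.coe_insert,
    Finset.coe_singleton, Set.mem_insert_iff, Set.mem_singleton_iff, Prod.exists,
    Set.mem_ofPred_eq]
  constructor
  · rintro ⟨a₁, a₂, a₃, a₄, a₅, h₁, h₂, h₃, h₄, h₅, rfl⟩
    exact ⟨a₁, a₂, a₃, a₄, a₅, ⟨h₁, h₂, h₃, h₄, h₅⟩, rfl⟩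
  · rintro ⟨a₁, a₂, a₃, a₄, a₅, ⟨h₁, h₂, h₃, h₄, h₅⟩, rfl⟩
    exact ⟨a₁, a₂, a₃, a₄, a₅, h₁, h₂, h₃, h₄, h₅, rfl⟩

theorem ncard_thats : thats.ncard = 32 := by
  rw [thats_eq_image, ← Finset.coe_image, Set.ncard_coe_finset]
  rfl

theorem orbit_eq_thats_of_ncard {s : Finset (ZMod 12)} (hs : s.card = 7)
    (h : (orbit Gamma s).ncard = 32) : orbit Gamma s = thats := by
  have hsub : orbit Gamma s ⊆ thats := by
    rintro t ⟨g, rfl⟩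
    refine mem_thats_of_stabilizer_eq_bot (by rw [Finset.card_smul_finset, hs]) ?_
    apply stabilizer_eq_bot_of_card_le_ncard_orbit
    rw [orbit_smul, h]
    exact card_Gamma_le
  exact Set.eq_of_subset_of_ncard_le hsub (by rw [ncard_thats, h])

theorem thats_subset_orbit :
    thats ⊆ orbit Gamma ({0, 1, 3, 5, 7, 8, 10} : Finset (ZMod 12)) := by
  rintro u ⟨a₁, a₂, a₃, a₄, a₅, h₁, h₂, h₃, h₄, h₅, rfl⟩
  have hmem : ∀ {a b c : ZMod 12}, swap a c ∈ Gamma → (b = a ∨ b = c) → swap a b ∈ Gamma := by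
    rintro a b c hac (rfl | rfl)
    · rw [swap_self]
      exact one_mem _
    · exact hac
  suffices h : (swap 1 a₁ * swap 3 a₂ * swap 5 a₃ * swap 8 a₄ * swap 10 a₅) •
      ({0, 1, 3, 5, 7, 8, 10} : Finset (ZMod 12)) = {0, a₁, a₂, a₃, 7, a₄, a₅} from
    ⟨⟨_, mul_mem (mul_mem (mul_mem (mul_mem (hmem (gammaGenerators_mem 0) h₁)
      (hmem (gammaGenerators_mem 1) h₂)) (hmem (gammaGenerators_mem 2) h₃))
      (hmem (gammaGenerators_mem 3) h₄)) (hmem (gammaGenerators_mem 4) h₅)⟩, h⟩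
  rcases h₁ with rfl | rfl <;> rcases h₂ with rfl | rfl <;> rcases h₃ with rfl | rfl <;>
    rcases h₄ with rfl | rfl <;> rcases h₅ with rfl | rfl <;> decide

/-- Any maximal Γ-orbit of T₇ equals the set of the 32 thāts, which has 32 elements. -/
theorem gamma_maximal_orbit_eq_thats :
    (∀ s : Finset (ZMod 12), 0 ∈ s → s.card = 7 →
      (∀ t : Finset (ZMod 12), 0 ∈ t → t.card = 7 →
        Nat.card (gammaOrbit t) ≤ Nat.card (gammaOrbit s)) →
      gammaOrbit s = thats) ∧
    Nat.card thats = 32 := by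
  refine ⟨fun s _ hs hmax => ?_, by rw [Nat.card_coe_set_eq, ncard_thats]⟩
  simp only [gammaOrbit_eq_orbit, Nat.card_coe_set_eq] at hmax ⊢
  refine orbit_eq_thats_of_ncard hs (le_antisymm (ncard_orbit_le s) ?_)
  calc 32 = thats.ncard := ncard_thats.symm
    _ ≤ (orbit Gamma ({0, 1, 3, 5, 7, 8, 10} : Finset (ZMod 12))).ncard :=
      Set.ncard_le_ncard thats_subset_orbit
    _ ≤ (orbit Gamma s).ncard := hmax _ (by decide) (by decide)
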